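/- arXiv:1906.02435 — 3 statements merged into one kernel-verified Lean document; each statement's English description precedes it below -/
import Mathlib

section
/- Let q₁,…,q_k be unit vectors in ℝⁿ and ε ∈ [0,1] with (1/k)∑ᵢ ‖qᵢ‖₄⁴ ≥ 1 − ε. Then for each i there exist an index jᵢ ∈ {1,…,n} and a sign sᵢ ∈ {1,−1} such that (1/k)∑ᵢ ‖qᵢ − sᵢ e_{jᵢ}‖₂² ≤ 2ε. -/
/-!
For a single unit vector `q`, take `j` maximising `|q j|` and `s` the sign of `q j`. Then
`‖q - s e_j‖₂² = 2 - 2|q j|`, while `‖q‖₄⁴ ≤ q j² ‖q‖₂² = q j² ≤ |q j|`; hence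
`‖q - s e_j‖₂² ≤ 2 - 2‖q‖₄⁴`. Averaging this over the `qᵢ` gives the bound `2ε`.
-/

open Finset

variable {ι : Type*} [Fintype ι]

theorem sum_pow_four_le_sq_mul_sum_sq {q : ι → ℝ} {j : ι} (hj : ∀ l, |q l| ≤ |q j|) :
    ∑ l, q l ^ 4 ≤ q j ^ 2 * ∑ l, q l ^ 2 := by
  rw [mul_sum]
  refine sum_le_sum fun l _ => ?_
  have hl : q l ^ 2 ≤ q j ^ 2 := sq_le_sq.mpr (hj l)
  nlinarith [sq_nonneg (q l)]

theorem sq_le_abs_of_sum_sq_eq_one {q : ι → ℝ} (hq : ∑ l, q l ^ 2 = 1) (j : ι) :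
    q j ^ 2 ≤ |q j| := by
  have hj : q j ^ 2 ≤ 1 := hq ▸ single_le_sum (fun l _ => sq_nonneg (q l)) (mem_univ j)
  have hj' : |q j| ≤ 1 := (sq_le_one_iff_abs_le_one _).mp hj
  nlinarith [sq_abs (q j), abs_nonneg (q j)]

theorem sum_sq_sub_mul_indicator [DecidableEq ι] {q : ι → ℝ} (hq : ∑ l, q l ^ 2 = 1)
    {s : ℝ} (hs : s ^ 2 = 1) (j : ι) :
    ∑ l, (q l - s * (if l = j then (1 : ℝ) else 0)) ^ 2 = 2 - 2 * (s * q j) := by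
  have hterm : ∀ l, (q l - s * (if l = j then (1 : ℝ) else 0)) ^ 2
      = q l ^ 2 + (if l = j then s ^ 2 - 2 * (s * q j) else 0) := by
    intro l
    split_ifs with hl
    · subst hl; ring
    · ring
  simp only [hterm, sum_add_distrib, hq, sum_ite_eq', mem_univ, if_true, hs]
  ring

theorem exists_sign_sum_sq_sub_mul_indicator_le [DecidableEq ι] {q : ι → ℝ}
    (hq : ∑ l, q l ^ 2 = 1) :
    ∃ (j : ι) (s : ℝ), (s = 1 ∨ s = -1) ∧
      ∑ l, (q l - s * (if l = j then (1 : ℝ) else 0)) ^ 2 ≤ 2 - 2 * ∑ l, q l ^ 4 := by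
  have hne : (univ : Finset ι).Nonempty := nonempty_of_sum_ne_zero (by rw [hq]; exact one_ne_zero)
  obtain ⟨j, -, hj⟩ := exists_max_image univ (fun l => |q l|) hne
  have hmax : ∀ l, |q l| ≤ |q j| := fun l => hj l (mem_univ l)
  set s : ℝ := if 0 ≤ q j then 1 else -1 with hs_def
  have hs : s = 1 ∨ s = -1 := by rw [hs_def]; split_ifs <;> simp
  have hsq : s * q j = |q j| := by
    rw [hs_def]
    split_ifs with h0
    · rw [abs_of_nonneg h0, one_mul]
    · rw [abs_of_neg (not_le.mp h0), neg_one_mul]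
  refine ⟨j, s, hs, ?_⟩
  have hs2 : s ^ 2 = 1 := by rcases hs with h | h <;> rw [h] <;> norm_num
  have h4 : ∑ l, q l ^ 4 ≤ |q j| :=
    calc ∑ l, q l ^ 4 ≤ q j ^ 2 * ∑ l, q l ^ 2 := sum_pow_four_le_sq_mul_sum_sq hmax
      _ = q j ^ 2 := by rw [hq, mul_one]
      _ ≤ |q j| := sq_le_abs_of_sum_sq_eq_one hq j
  rw [sum_sq_sub_mul_indicator hq hs2, hsq]
  linarith

theorem l4_multiple_vectors_sphere_general {k n : ℕ} (q : Fin k → Fin n → ℝ)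
    (hq : ∀ i, ∑ l, q i l ^ 2 = 1)
    (ε : ℝ)
    (h : 1 - ε ≤ (1 / (k : ℝ)) * ∑ i, ∑ l, q i l ^ 4) :
    ∃ (j : Fin k → Fin n) (s : Fin k → ℝ),
      (∀ i, s i = 1 ∨ s i = -1) ∧
      (1 / (k : ℝ)) * ∑ i, ∑ l, (q i l - s i * (if l = j i then (1:ℝ) else 0)) ^ 2 ≤ 2 * ε := by
  choose j s hs hsum using fun i => exists_sign_sum_sq_sub_mul_indicator_le (hq i)
  refine ⟨j, s, hs, ?_⟩
  calc (1 / (k : ℝ)) * ∑ i, ∑ l, (q i l - s i * (if l = j i then (1:ℝ) else 0)) ^ 2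
      ≤ (1 / (k : ℝ)) * ∑ i, (2 - 2 * ∑ l, q i l ^ 4) := by
        gcongr with i; exact hsum i
    _ = 2 * ((k : ℝ) / k) - 2 * ((1 / (k : ℝ)) * ∑ i, ∑ l, q i l ^ 4) := by
        rw [sum_sub_distrib, sum_const, card_univ, Fintype.card_fin, ← mul_sum, nsmul_eq_mul]
        ring
    -- `k / k ≤ 1` rather than `= 1`: for `k = 0` both averages are `0`.
    _ ≤ 2 * ε := by linarith [div_self_le_one (k : ℝ)]

/-- Multiple-vector version: if `q₁, …, q_k` are unit vectors in `ℝⁿ` with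
`(1/k) ∑ᵢ ‖qᵢ‖₄⁴ ≥ 1 - ε` for `ε ∈ [0,1]`, then there are indices `jᵢ` and signs
`sᵢ ∈ {1,-1}` such that `(1/k) ∑ᵢ ‖qᵢ - sᵢ e_{jᵢ}‖₂² ≤ 2ε`. -/
theorem l4_multiple_vectors_sphere {k n : ℕ} (q : Fin k → Fin n → ℝ)
    (hq : ∀ i, ∑ l, q i l ^ 2 = 1)
    (ε : ℝ) (hε : ε ∈ Set.Icc (0 : ℝ) 1)
    (h : 1 - ε ≤ (1 / (k : ℝ)) * ∑ i, ∑ l, q i l ^ 4) :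
    ∃ (j : Fin k → Fin n) (s : Fin k → ℝ),
      (∀ i, s i = 1 ∨ s i = -1) ∧
      (1 / (k : ℝ)) * ∑ i, ∑ l, (q i l - s i * (if l = j i then (1:ℝ) else 0)) ^ 2 ≤ 2 * ε :=
  l4_multiple_vectors_sphere_general q hq ε h
end

section
/- For any square matrix A ∈ ℝⁿˣⁿ with singular value decomposition A = UΣVᵀ, the orthogonal matrix M minimizing ‖A − M‖_F over all M ∈ O(n,ℝ) is M = UVᵀ. -/
/-!
For orthogonal `X`, `‖A - X‖² = ‖A‖² + n - 2 tr(AᵀX)`, so the task is to maximise `tr(AᵀX)`.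
With `Q = UᵀXV`, again orthogonal, `tr(AᵀX) = tr(SQ) = ∑ Sᵢᵢ Qᵢᵢ ≤ ∑ Sᵢᵢ`, because the entries of
an orthogonal matrix are at most `1` and `S ≥ 0`; equality holds at `Q = 1`, that is `X = UVᵀ`.
-/

open Matrix Finset

/-- The squared Frobenius norm of a matrix. -/
def frobSq {n : ℕ} (A : Matrix (Fin n) (Fin n) ℝ) : ℝ :=
  ∑ i, ∑ j, A i j ^ 2

namespace Matrix

variable {ι : Type*} [Fintype ι]

theorem trace_transpose_mul_of_eq_mul_mul_transpose {R : Type*} [CommSemiring R]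
    {A U S V : Matrix ι ι R} (hA : A = U * S * Vᵀ) (X : Matrix ι ι R) :
    trace (Aᵀ * X) = trace (Sᵀ * (Uᵀ * X * V)) := by
  rw [hA, transpose_mul, transpose_mul, transpose_transpose, Matrix.mul_assoc, Matrix.mul_assoc,
    trace_mul_comm, Matrix.mul_assoc, Matrix.mul_assoc]

variable [DecidableEq ι]

theorem apply_le_one_of_mem_orthogonalGroup {Q : Matrix ι ι ℝ}
    (hQ : Q ∈ orthogonalGroup ι ℝ) (i j : ι) : Q i j ≤ 1 :=
  (le_abs_self _).trans (entry_norm_bound_of_unitary hQ i j)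

theorem trace_mul_le_trace_of_isDiag {S Q : Matrix ι ι ℝ} (hS : S.IsDiag)
    (hS_nonneg : ∀ i, 0 ≤ S i i) (hQ : Q ∈ orthogonalGroup ι ℝ) :
    trace (S * Q) ≤ trace S := by
  calc trace (S * Q) = ∑ i, S i i * Q i i := by
        conv_lhs => rw [← hS.diagonal_diag]
        simp only [trace, Matrix.diag_apply, diagonal_mul]
    _ ≤ ∑ i, S i i := by
        gcongr with i
        exact mul_le_of_le_one_right (hS_nonneg i) (apply_le_one_of_mem_orthogonalGroup hQ i i)
    _ = trace S := rfl

end Matrix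

theorem frobSq_eq_trace {n : ℕ} (A : Matrix (Fin n) (Fin n) ℝ) :
    frobSq A = trace (Aᵀ * A) := by
  simp only [frobSq, trace, Matrix.diag_apply, mul_apply, transpose_apply, sq]
  exact Finset.sum_comm

theorem frobSq_sub_of_mem_orthogonalGroup {n : ℕ} (A : Matrix (Fin n) (Fin n) ℝ)
    {X : Matrix (Fin n) (Fin n) ℝ} (hX : X ∈ orthogonalGroup (Fin n) ℝ) :
    frobSq (A - X) = frobSq A + n - 2 * trace (Aᵀ * X) := by
  have hXA : trace (Xᵀ * A) = trace (Aᵀ * X) := by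
    rw [← trace_transpose, transpose_mul, transpose_transpose]
  rw [frobSq_eq_trace, frobSq_eq_trace, transpose_sub, sub_mul, mul_sub, mul_sub,
    (mem_orthogonalGroup_iff' _ _).1 hX, trace_sub, trace_sub, trace_sub, hXA, trace_one,
    Fintype.card_fin]
  ring

/-- Projection onto the orthogonal group: if `A = U Σ Vᵀ` is a singular value
decomposition of `A` (with `U`, `V` orthogonal and `Σ` diagonal with nonnegative
entries), then `U Vᵀ` minimizes the Frobenius distance to `A` among all orthogonal
matrices. -/
theorem svd_polar_factor_closest_orthogonal {n : ℕ}
    (A U S V : Matrix (Fin n) (Fin n) ℝ)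
    (hU : Uᵀ * U = 1) (hV : Vᵀ * V = 1)
    (hSdiag : S.IsDiag) (hSnonneg : ∀ i, 0 ≤ S i i)
    (hSVD : A = U * S * Vᵀ) :
    ∀ M : Matrix (Fin n) (Fin n) ℝ, Mᵀ * M = 1 →
      frobSq (A - U * Vᵀ) ≤ frobSq (A - M) := by
  intro M hM
  rw [← mem_orthogonalGroup_iff'] at hU hV hM
  have hUV : U * Vᵀ ∈ orthogonalGroup (Fin n) ℝ := mul_mem hU (Unitary.star_mem hV)
  have hQ : Uᵀ * M * V ∈ orthogonalGroup (Fin n) ℝ :=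
    mul_mem (mul_mem (Unitary.star_mem hU) hM) hV
  have hUV_reduced : Uᵀ * (U * Vᵀ) * V = 1 := by
    rw [← Matrix.mul_assoc, (mem_orthogonalGroup_iff' _ _).1 hU, Matrix.one_mul,
      (mem_orthogonalGroup_iff' _ _).1 hV]
  suffices trace (Aᵀ * M) ≤ trace (Aᵀ * (U * Vᵀ)) by
    rw [frobSq_sub_of_mem_orthogonalGroup A hUV, frobSq_sub_of_mem_orthogonalGroup A hM]
    linarith
  rw [trace_transpose_mul_of_eq_mul_mul_transpose hSVD,
    trace_transpose_mul_of_eq_mul_mul_transpose hSVD, hUV_reduced, Matrix.mul_one, hSdiag.isSymm.eq]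
  exact trace_mul_le_trace_of_isDiag hSdiag hSnonneg hQ
end

section
/- For any two orthogonal matrices W₁, W₂ ∈ O(n,ℝ), the entrywise cubes satisfy ‖W₁^{∘3} − W₂^{∘3}‖_F ≤ 3n ‖W₁ − W₂‖₂. -/
/-!
Entries of an orthogonal matrix lie in `[-1, 1]`, where `t ↦ t³` is `3`-Lipschitz, and every entry
of a matrix is bounded by its operator norm. Hence each of the `n²` entries of `W₁^{∘3} − W₂^{∘3}`
is at most `3 ‖W₁ − W₂‖₂` in absolute value, and the Frobenius norm is at most `n` times that.
-/

open Matrix Finset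

/-- The spectral (ℓ²-operator) norm of a square real matrix. -/
noncomputable def specNorm {n : ℕ} (A : Matrix (Fin n) (Fin n) ℝ) : ℝ :=
  ‖LinearMap.toContinuousLinearMap (Matrix.toEuclideanLin A)‖

/-- Entrywise cube of a matrix. -/
def cube {n : ℕ} (W : Matrix (Fin n) (Fin n) ℝ) : Matrix (Fin n) (Fin n) ℝ :=
  fun i j => W i j ^ 3

lemma abs_pow_sub_pow_le_of_abs_le_one {α : Type*} [CommRing α] [LinearOrder α] [IsOrderedRing α]
    {a b : α} (ha : |a| ≤ 1) (hb : |b| ≤ 1) (k : ℕ) : |a ^ k - b ^ k| ≤ k * |a - b| := by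
  calc |a ^ k - b ^ k| ≤ |a - b| * k * max |a| |b| ^ (k - 1) := abs_pow_sub_pow_le a b k
    _ ≤ |a - b| * k * 1 := by gcongr; exact pow_le_one₀ (by positivity) (max_le ha hb)
    _ = k * |a - b| := by ring

lemma abs_apply_le_one_of_transpose_mul_self_eq_one {ι : Type*} [Fintype ι] [DecidableEq ι]
    {W : Matrix ι ι ℝ} (hW : Wᵀ * W = 1) (i j : ι) : |W i j| ≤ 1 :=
  entry_norm_bound_of_unitary (mem_unitaryGroup_iff'.2 hW) i j

lemma abs_apply_le_specNorm {n : ℕ} (A : Matrix (Fin n) (Fin n) ℝ) (i j : Fin n) :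
    |A i j| ≤ specNorm A := by
  set T := LinearMap.toContinuousLinearMap (Matrix.toEuclideanLin A)
  let e : EuclideanSpace ℝ (Fin n) := EuclideanSpace.single j 1
  have hTe : T e i = A i j := by simp [T, e]
  calc |A i j| = ‖T e i‖ := by rw [hTe, Real.norm_eq_abs]
    _ ≤ ‖T e‖ := PiLp.norm_apply_le _ _
    _ ≤ ‖T‖ := T.unit_le_opNorm e (by simp [e])

lemma sqrt_sum_sq_le_card_mul_of_abs_le {ι : Type*} [Fintype ι] (A : Matrix ι ι ℝ) {c : ℝ}
    (hA : ∀ i j, |A i j| ≤ c) : √(∑ i, ∑ j, A i j ^ 2) ≤ Fintype.card ι * c := by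
  have hc : 0 ≤ Fintype.card ι * c := by
    rcases isEmpty_or_nonempty ι with _ | ⟨⟨i⟩⟩
    · simp
    · exact mul_nonneg (Nat.cast_nonneg _) ((abs_nonneg _).trans (hA i i))
  have hsq : ∀ i j, A i j ^ 2 ≤ c ^ 2 := fun i j =>
    sq_le_sq' (abs_le.1 (hA i j)).1 (abs_le.1 (hA i j)).2
  refine Real.sqrt_le_iff.2 ⟨hc, ?_⟩
  calc ∑ i, ∑ j, A i j ^ 2 ≤ ∑ _i : ι, ∑ _j : ι, c ^ 2 :=
        sum_le_sum fun i _ => sum_le_sum fun j _ => hsq i j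
    _ = (Fintype.card ι * c) ^ 2 := by simp only [sum_const, card_univ, nsmul_eq_mul]; ring

/-- Lipschitz bound for entrywise cubes of orthogonal matrices:
`‖W₁^{∘3} − W₂^{∘3}‖_F ≤ 3n ‖W₁ − W₂‖₂`. -/
theorem cube_lipschitz_orthogonal {n : ℕ}
    (W₁ W₂ : Matrix (Fin n) (Fin n) ℝ)
    (hW₁ : W₁ᵀ * W₁ = 1) (hW₂ : W₂ᵀ * W₂ = 1) :
    Real.sqrt (∑ i, ∑ j, (cube W₁ i j - cube W₂ i j) ^ 2)
      ≤ 3 * (n : ℝ) * specNorm (W₁ - W₂) := by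
  have hentry : ∀ i j, |(cube W₁ - cube W₂) i j| ≤ 3 * specNorm (W₁ - W₂) := fun i j =>
    calc |W₁ i j ^ 3 - W₂ i j ^ 3| ≤ (3 : ℕ) * |W₁ i j - W₂ i j| :=
          abs_pow_sub_pow_le_of_abs_le_one (abs_apply_le_one_of_transpose_mul_self_eq_one hW₁ i j)
            (abs_apply_le_one_of_transpose_mul_self_eq_one hW₂ i j) 3
      _ ≤ 3 * specNorm (W₁ - W₂) := by
          push_cast; gcongr; exact abs_apply_le_specNorm (W₁ - W₂) i j
  calc _ ≤ Fintype.card (Fin n) * (3 * specNorm (W₁ - W₂)) :=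
        sqrt_sum_sq_le_card_mul_of_abs_le (cube W₁ - cube W₂) hentry
    _ = 3 * n * specNorm (W₁ - W₂) := by rw [Fintype.card_fin]; ring
end
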